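/- For every s ∈ S and every idempotent e ∈ E(S), the image of Ω_{e * s⋆ * s} under λ_s equals Ω_{s * e * s⋆}; that is, {λ_s(ξ) : ξ ∈ Ω_{e * s⋆ * s}} = Ω_{s * e * s⋆}. -/
import Mathlib


/-- An inverse semigroup with zero: every element `s` has a unique generalized
inverse `star s`, and `0` is absorbing. -/
class InverseSemigroupWithZero (S : Type*) extends Semigroup S, Zero S, Star S where
  zero_mul : ∀ s : S, 0 * s = 0
  mul_zero : ∀ s : S, s * 0 = 0
  mul_star_mul_self : ∀ s : S, s * star s * s = s
  star_mul_self_star : ∀ s : S, star s * s * star s = star s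
  star_unique : ∀ s x : S, s * x * s = s → x * s * x = x → x = star s

variable {S : Type*} [InverseSemigroupWithZero S]

/-- The natural partial order on an inverse semigroup: `s ≤ t` iff `t * s⋆ * s = s`. -/
def natLe (s t : S) : Prop := t * star s * s = s

/-- A filter in the inverse semigroup `S` (w.r.t. the natural partial order). -/
def IsFilterS (ξ : Set S) : Prop :=
  ξ.Nonempty ∧ (0 : S) ∉ ξ ∧
    (∀ x ∈ ξ, ∀ y : S, natLe x y → y ∈ ξ) ∧
    ∀ x ∈ ξ, ∀ y ∈ ξ, ∃ z ∈ ξ, natLe z x ∧ natLe z y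

/-- An ultrafilter: a filter maximal under inclusion. -/
def IsUltraS (ξ : Set S) : Prop :=
  IsFilterS ξ ∧ ∀ η : Set S, IsFilterS η → ξ ⊆ η → η = ξ

/-- The set `Ω` of all ultrafilters in `S`. -/
def OmegaAll (S : Type*) [InverseSemigroupWithZero S] : Set (Set S) := {ξ | IsUltraS ξ}

/-- `Ω_e`: the set of ultrafilters `ξ` with `eξ ⊆ ξ`. -/
def OmegaE (e : S) : Set (Set S) := {ξ | IsUltraS ξ ∧ ∀ t ∈ ξ, e * t ∈ ξ}

/-- The map `λₛ` on filters. -/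
def lambdaMap (s : S) (ξ : Set S) : Set S := {u | ∃ t ∈ ξ, natLe (s * t) u}

/-- `y` is dense in `x` (for idempotents `y ≤ x`): there is no nonzero idempotent
`z ≤ x` with `z * y = 0`. -/
def DenseIn (y x : S) : Prop :=
  ∀ z : S, IsIdempotentElem z → z * x = z → z * y = 0 → z = 0

/-- `s` essentially coincides with `t`. -/
def EssEq (s t : S) : Prop :=
  star s * s = star t * t ∧
    ∀ f : S, IsIdempotentElem f → f ≠ 0 → f * (star s * s) = f →
      ∃ e : S, IsIdempotentElem e ∧ e ≠ 0 ∧ e * f = e ∧ s * e = t * e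
namespace ISWZ

variable {S : Type*} [InverseSemigroupWithZero S]

lemma mss (s : S) : s * star s * s = s := InverseSemigroupWithZero.mul_star_mul_self s
lemma sms (s : S) : star s * s * star s = star s := InverseSemigroupWithZero.star_mul_self_star s

lemma star_star' (s : S) : star (star s) = s :=
  (InverseSemigroupWithZero.star_unique (star s) s (sms s) (mss s)).symm

lemma star_of_idem {e : S} (he : e * e = e) : star e = e :=
  (InverseSemigroupWithZero.star_unique e e (by rw [he, he]) (by rw [he, he])).symm

lemma pull {e : S} (he : e * e = e) (x : S) : e * (e * x) = e * x := by
  rw [← mul_assoc, he]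

lemma m1 (s : S) : s * (star s * s) = s := by rw [← mul_assoc]; exact mss s
lemma m2 (s : S) : star s * (s * star s) = star s := by rw [← mul_assoc]; exact sms s
lemma m1' (s x : S) : s * (star s * (s * x)) = s * x := by
  rw [← mul_assoc, ← mul_assoc, mss]
lemma m2' (s x : S) : star s * (s * (star s * x)) = star s * x := by
  rw [← mul_assoc, ← mul_assoc, sms]

lemma idem_left (s : S) : (star s * s) * (star s * s) = star s * s := by
  rw [mul_assoc, m1]
lemma idem_right (s : S) : (s * star s) * (s * star s) = s * star s := by
  rw [mul_assoc, m2]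

lemma idem_mul {e f : S} (he : e * e = e) (hf : f * f = f) : (e * f) * (e * f) = e * f := by
  have key : f * star (e * f) * e = star (e * f) := by
    apply InverseSemigroupWithZero.star_unique
    · calc (e * f) * (f * star (e * f) * e) * (e * f)
          = e * (f * (f * (star (e * f) * (e * (e * f))))) := by simp only [mul_assoc]
        _ = e * (f * (star (e * f) * (e * f))) := by rw [pull hf, pull he]
        _ = e * f := by simpa only [mul_assoc] using mss (e * f)
    · calc (f * star (e * f) * e) * (e * f) * (f * star (e * f) * e)
          = f * (star (e * f) * (e * (e * (f * (f * (star (e * f) * e)))))) := by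
            simp only [mul_assoc]
        _ = f * (star (e * f) * (e * (f * (star (e * f) * e)))) := by rw [pull he, pull hf]
        _ = f * (star (e * f) * e) := by
            have h := m2' (e * f) e
            simp only [mul_assoc] at h
            rw [h]
        _ = f * star (e * f) * e := by rw [mul_assoc]
  have haa : star (e * f) * star (e * f) = star (e * f) := by
    rw [← key]
    calc (f * star (e * f) * e) * (f * star (e * f) * e)
        = f * (star (e * f) * (e * (f * (star (e * f) * e)))) := by simp only [mul_assoc]
      _ = f * (star (e * f) * e) := by
          have h := m2' (e * f) e
          simp only [mul_assoc] at h
          rw [h]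
      _ = f * star (e * f) * e := by rw [mul_assoc]
  have hef : e * f = star (e * f) := by
    have h := InverseSemigroupWithZero.star_unique (star (e * f)) (e * f) (sms (e * f)) (mss (e * f))
    rwa [star_of_idem haa] at h
  calc (e * f) * (e * f) = star (e * f) * star (e * f) := by rw [← hef]
    _ = star (e * f) := haa
    _ = e * f := hef.symm

lemma idem_comm {e f : S} (he : e * e = e) (hf : f * f = f) : e * f = f * e := by
  have hef := idem_mul he hf
  have hfe := idem_mul hf he
  have h1 : f * e = star (e * f) := by
    apply InverseSemigroupWithZero.star_unique
    · calc (e * f) * (f * e) * (e * f)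
          = e * (f * (f * (e * (e * f)))) := by simp only [mul_assoc]
        _ = e * (f * (e * f)) := by rw [pull hf, pull he]
        _ = e * f := by simpa only [mul_assoc] using hef
    · calc (f * e) * (e * f) * (f * e)
          = f * (e * (e * (f * (f * e)))) := by simp only [mul_assoc]
        _ = f * (e * (f * e)) := by rw [pull he, pull hf]
        _ = f * e := by simpa only [mul_assoc] using hfe
  rw [star_of_idem hef] at h1
  exact h1.symm

lemma star_mul' (s t : S) : star (s * t) = star t * star s := by
  symm
  apply InverseSemigroupWithZero.star_unique
  · calc (s * t) * (star t * star s) * (s * t)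
        = (s * ((t * star t) * (star s * s))) * t := by simp only [mul_assoc]
      _ = (s * ((star s * s) * (t * star t))) * t := by
          rw [idem_comm (idem_right t) (idem_left s)]
      _ = (s * (star s * s)) * (t * (star t * t)) := by simp only [mul_assoc]
      _ = s * t := by rw [m1, m1]
  · calc (star t * star s) * (s * t) * (star t * star s)
        = (star t * ((star s * s) * (t * star t))) * star s := by simp only [mul_assoc]
      _ = (star t * ((t * star t) * (star s * s))) * star s := by
          rw [idem_comm (idem_left s) (idem_right t)]
      _ = (star t * (t * star t)) * (star s * (s * star s)) := by simp only [mul_assoc]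
      _ = star t * star s := by rw [m2, m2]

/-! ### Order lemmas -/

lemma natLe_refl (t : S) : natLe t t := mss t

lemma le_zero {u : S} (h : natLe u 0) : u = 0 := by
  have h' : 0 * star u * u = u := h
  rw [InverseSemigroupWithZero.zero_mul, InverseSemigroupWithZero.zero_mul] at h'
  exact h'.symm

lemma le_idem_right {g : S} (hg : g * g = g) (t : S) : natLe (t * g) t := by
  show t * star (t * g) * (t * g) = t * g
  rw [star_mul', star_of_idem hg]
  calc t * (g * star t) * (t * g)
      = t * ((g * (star t * t)) * g) := by simp only [mul_assoc]
    _ = t * (((star t * t) * g) * g) := by rw [idem_comm hg (idem_left t)]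
    _ = (t * (star t * t)) * (g * g) := by simp only [mul_assoc]
    _ = t * g := by rw [m1, hg]

lemma le_idem_left {f : S} (hf : f * f = f) (t : S) : natLe (f * t) t := by
  show t * star (f * t) * (f * t) = f * t
  rw [star_mul', star_of_idem hf]
  calc t * (star t * f) * (f * t)
      = (t * star t) * (f * (f * t)) := by simp only [mul_assoc]
    _ = (t * star t) * (f * t) := by rw [pull hf]
    _ = ((t * star t) * f) * t := by simp only [mul_assoc]
    _ = (f * (t * star t)) * t := by rw [idem_comm (idem_right t) hf]
    _ = f * (t * (star t * t)) := by simp only [mul_assoc]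
    _ = f * t := by rw [m1]

lemma natLe_trans {a b c : S} (hab : natLe a b) (hbc : natLe b c) : natLe a c := by
  have hab' : b * (star a * a) = a := by rw [← mul_assoc]; exact hab
  have hbc' : c * (star b * b) = b := by rw [← mul_assoc]; exact hbc
  have hkey : c * ((star b * b) * (star a * a)) = a := by rw [← mul_assoc, hbc', hab']
  have h4 := le_idem_right (idem_mul (idem_left b) (idem_left a)) c
  rwa [hkey] at h4

lemma natLe_mul_left {s t : S} (a : S) (h : natLe s t) : natLe (a * s) (a * t) := by
  have ht : t * (star s * s) = s := by rw [← mul_assoc]; exact h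
  have h' : (a * t) * (star s * s) = a * s := by rw [mul_assoc, ht]
  have h2 := le_idem_right (idem_left s) (a * t)
  rwa [h'] at h2

lemma le_idem_mono {g g' : S} (hg : g * g = g) (hg' : g' * g' = g') (hgg : g' * g = g)
    (u : S) : natLe (g * u) (g' * u) := by
  have h1 : g * (g' * u) = g * u := by rw [← mul_assoc, idem_comm hg hg', hgg]
  have h2 := le_idem_left hg (g' * u)
  rwa [h1] at h2

end ISWZ
namespace ISWZ

variable {S : Type*} [InverseSemigroupWithZero S]

lemma lambda_filter (s : S) {ξ : Set S} (hξ : IsFilterS ξ)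
    (h : ∀ t ∈ ξ, star s * s * t ∈ ξ) : IsFilterS (lambdaMap s ξ) := by
  obtain ⟨⟨t0, ht0⟩, h0, up, dir⟩ := hξ
  refine ⟨⟨s * t0, t0, ht0, natLe_refl _⟩, ?_, ?_, ?_⟩
  · rintro ⟨t, ht, hle⟩
    have h1 : s * t = 0 := le_zero hle
    have h2 := h t ht
    have h3 : star s * s * t = 0 := by
      rw [mul_assoc, h1, InverseSemigroupWithZero.mul_zero]
    rw [h3] at h2
    exact h0 h2
  · rintro u ⟨t, ht, hle⟩ v huv
    exact ⟨t, ht, natLe_trans hle huv⟩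
  · rintro u ⟨t1, ht1, hle1⟩ v ⟨t2, ht2, hle2⟩
    obtain ⟨z, hz, hz1, hz2⟩ := dir t1 ht1 t2 ht2
    exact ⟨s * z, ⟨z, hz, natLe_refl _⟩,
      natLe_trans (natLe_mul_left s hz1) hle1,
      natLe_trans (natLe_mul_left s hz2) hle2⟩

lemma lambda_lambda (s : S) {ξ : Set S} (hξ : IsFilterS ξ)
    (h : ∀ t ∈ ξ, star s * s * t ∈ ξ) :
    lambdaMap (star s) (lambdaMap s ξ) = ξ := by
  obtain ⟨ne, h0, up, dir⟩ := hξ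
  ext w
  constructor
  · rintro ⟨u, ⟨t, ht, hle⟩, hle2⟩
    have h1 := natLe_mul_left (star s) hle
    have h2 : star s * (s * t) = star s * s * t := by rw [mul_assoc]
    rw [h2] at h1
    exact up _ (h t ht) w (natLe_trans h1 hle2)
  · intro hw
    refine ⟨s * w, ⟨w, hw, natLe_refl _⟩, ?_⟩
    have h1 := le_idem_left (idem_left s) w
    rwa [mul_assoc] at h1

lemma lambda_ultra (s : S) {ξ : Set S} (hξ : IsUltraS ξ)
    (h : ∀ t ∈ ξ, star s * s * t ∈ ξ) : IsUltraS (lambdaMap s ξ) := by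
  obtain ⟨hf, hmax⟩ := hξ
  refine ⟨lambda_filter s hf h, ?_⟩
  intro η hη hsub
  have hζf : IsFilterS (lambdaMap (star s) η) := by
    obtain ⟨⟨u0, hu0⟩, h0, up, dir⟩ := hη
    refine ⟨⟨star s * u0, u0, hu0, natLe_refl _⟩, ?_, ?_, ?_⟩
    · rintro ⟨u, hu, hle⟩
      have hsu : star s * u = 0 := le_zero hle
      obtain ⟨t0, ht0⟩ := hf.1
      have hst0 : s * t0 ∈ η := hsub ⟨t0, ht0, natLe_refl _⟩
      obtain ⟨z, hz, hzu, hzs⟩ := dir u hu (s * t0) hst0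
      have hzs' : s * t0 * star z * z = z := hzs
      have h1 : star s * z = 0 := by
        have h2 := natLe_mul_left (star s) hzu
        rw [hsu] at h2
        exact le_zero h2
      have h2 : s * (star s * z) = z := by
        conv_lhs => rw [← hzs']
        calc s * (star s * (s * t0 * star z * z))
            = (s * (star s * s)) * (t0 * (star z * z)) := by simp only [mul_assoc]
          _ = s * (t0 * (star z * z)) := by rw [m1]
          _ = s * t0 * star z * z := by simp only [mul_assoc]
          _ = z := hzs'
      have h3 : z = 0 := by
        rw [← h2, h1, InverseSemigroupWithZero.mul_zero]
      rw [h3] at hz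
      exact h0 hz
    · rintro w ⟨u, hu, hle⟩ w' hww'
      exact ⟨u, hu, natLe_trans hle hww'⟩
    · rintro w1 ⟨u1, hu1, hl1⟩ w2 ⟨u2, hu2, hl2⟩
      obtain ⟨z, hz, h1, h2⟩ := dir u1 hu1 u2 hu2
      exact ⟨star s * z, ⟨z, hz, natLe_refl _⟩,
        natLe_trans (natLe_mul_left _ h1) hl1,
        natLe_trans (natLe_mul_left _ h2) hl2⟩
  have hζξ : lambdaMap (star s) η = ξ := by
    apply hmax _ hζf
    intro t ht
    refine ⟨s * t, hsub ⟨t, ht, natLe_refl _⟩, ?_⟩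
    have h1 := le_idem_left (idem_left s) t
    rwa [mul_assoc] at h1
  refine Set.Subset.antisymm ?_ hsub
  intro u hu
  have h1 : star s * u ∈ ξ := by
    rw [← hζξ]; exact ⟨u, hu, natLe_refl _⟩
  refine ⟨star s * u, h1, ?_⟩
  have h2 := le_idem_left (idem_right s) u
  rwa [mul_assoc] at h2

end ISWZ

open ISWZ in
theorem lambdaMap_image_omegaE (s e : S) (he : IsIdempotentElem e) :
    lambdaMap s '' OmegaE (e * star s * s) = OmegaE (s * e * star s) := by
  have he' : e * e = e := he
  ext η
  constructor
  · rintro ⟨ξ, ⟨hξu, hξe⟩, rfl⟩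
    have hss : ∀ t ∈ ξ, star s * s * t ∈ ξ := by
      intro t ht
      have h1 := hξe t ht
      have h2 := le_idem_left he' (star s * s * t)
      have h3 : e * (star s * s * t) = e * star s * s * t := by simp only [mul_assoc]
      rw [h3] at h2
      exact hξu.1.2.2.1 _ h1 _ h2
    refine ⟨lambda_ultra s hξu hss, ?_⟩
    rintro u ⟨t, ht, hle⟩
    refine ⟨e * star s * s * t, hξe t ht, ?_⟩
    have h1 := natLe_mul_left (s * e * star s) hle
    have h2 : s * e * star s * (s * t) = s * (e * star s * s * t) := by
      simp only [mul_assoc]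
    rw [h2] at h1
    exact h1
  · rintro ⟨hηu, hηe⟩
    have hses : (s * e * star s) * (s * e * star s) = s * e * star s := by
      calc (s * e * star s) * (s * e * star s)
          = s * ((e * (star s * s)) * (e * star s)) := by simp only [mul_assoc]
        _ = s * (((star s * s) * e) * (e * star s)) := by rw [idem_comm he' (idem_left s)]
        _ = (s * (star s * s)) * (e * (e * star s)) := by simp only [mul_assoc]
        _ = s * (e * star s) := by rw [m1, pull he']
        _ = s * e * star s := by simp only [mul_assoc]
    have hgg : (s * star s) * (s * e * star s) = s * e * star s := by
      calc (s * star s) * (s * e * star s)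
          = s * (star s * (s * (e * star s))) := by simp only [mul_assoc]
        _ = s * (e * star s) := by rw [m1']
        _ = s * e * star s := by simp only [mul_assoc]
    have hss' : ∀ u ∈ η, s * star s * u ∈ η := by
      intro u hu
      have h1 := hηe u hu
      have h2 := le_idem_mono hses (idem_right s) hgg u
      exact hηu.1.2.2.1 _ h1 _ h2
    have hcond : ∀ u ∈ η, star (star s) * star s * u ∈ η := by
      intro u hu
      rw [star_star']
      exact hss' u hu
    have hξu : IsUltraS (lambdaMap (star s) η) := lambda_ultra (star s) hηu hcond
    have hlam : lambdaMap s (lambdaMap (star s) η) = η := by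
      have h1 := lambda_lambda (star s) hηu.1 hcond
      rwa [star_star'] at h1
    refine ⟨lambdaMap (star s) η, ⟨hξu, ?_⟩, hlam⟩
    rintro t ⟨u, hu, hle⟩
    refine ⟨s * e * star s * u, hηe u hu, ?_⟩
    have heq : star s * (s * e * star s * u) = e * star s * s * (star s * u) := by
      calc star s * (s * e * star s * u)
          = ((star s * s) * e) * (star s * u) := by simp only [mul_assoc]
        _ = (e * (star s * s)) * (star s * u) := by rw [← idem_comm he' (idem_left s)]
        _ = e * star s * s * (star s * u) := by simp only [mul_assoc]
    rw [heq]
    exact natLe_mul_left (e * star s * s) hle
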